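/- arXiv:1010.2257 — 2 statements merged into one kernel-verified Lean document; each statement's English description precedes it below -/
import Mathlib

section
/- Let G be a finite simple graph on vertex set {1,…,n} that has a generic vertex, i.e. a vertex v such that the only automorphism of G fixing v is the identity. Then a subgroup Γ ≤ Γ0 = Aut(G) × Z2 is an isotropy subgroup of the Γ0-action on ℝ^n (i.e. Γ = Sym(u) for some u ∈ ℝ^n) if and only if Γ = Γ0 or −1 ∉ Γ. -/
open Matrix

/-- The automorphism group of a graph `G` on vertex set `Fin n`,
as a subgroup of the permutation group. -/
def autSubgroup {n : ℕ} (G : SimpleGraph (Fin n)) : Subgroup (Equiv.Perm (Fin n)) where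
  carrier := {π | ∀ i j, G.Adj (π i) (π j) ↔ G.Adj i j}
  one_mem' := fun i j => Iff.rfl
  mul_mem' := fun {a b} ha hb i j => (ha (b i) (b j)).trans (hb i j)
  inv_mem' := by
    intro a ha i j
    have h := ha (a⁻¹ i) (a⁻¹ j)
    simpa using h.symm

/-- `Γ0 = Aut(G) × Z2`, with `Z2 = {1,-1} = ℤˣ` written multiplicatively. -/
def Gamma0 {n : ℕ} (G : SimpleGraph (Fin n)) : Subgroup (Equiv.Perm (Fin n) × ℤˣ) :=
  (autSubgroup G).prod ⊤

/-- The action of `Γ0` on `ℝ^n`: `((π,β)·u)_i = β * u (π⁻¹ i)`. -/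
def act {n : ℕ} (γ : Equiv.Perm (Fin n) × ℤˣ) (u : Fin n → ℝ) : Fin n → ℝ :=
  fun i => ((γ.2 : ℤ) : ℝ) * u (γ.1⁻¹ i)

/-!
If `-1` fixes `u` then `u = 0`, whose symmetry is all of `Γ0`. Conversely, if `-1 ∉ Γ` take
`u = ∑_{γ ∈ Γ} γ · e_v`, which is `Γ`-invariant by construction. Since `-1 ∉ Γ` and `v` is
generic, `γ ↦ γ.1 v` is injective on `Γ`, so `u (γ.1 v) = γ.2` for `γ ∈ Γ` and `u` vanishes off
the orbit `Γ.1 v`. If `γ ∈ Γ0` fixes `u`, then `u (γ.1 v) = γ.2 ≠ 0`, so `γ.1 v = δ.1 v` for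
some `δ ∈ Γ`; genericity gives `γ.1 = δ.1`, and comparing values of `u` gives `γ.2 = δ.2`.
-/

theorem Equiv.Perm.eq_of_apply_eq_of_forall_fixed_eq_one {α : Type*}
    {A : Subgroup (Equiv.Perm α)} {v : α} (hgen : ∀ π ∈ A, π v = v → π = 1)
    {π σ : Equiv.Perm α} (hπ : π ∈ A) (hσ : σ ∈ A) (h : π v = σ v) : π = σ := by
  refine (inv_mul_eq_one.1 (hgen _ (mul_mem (inv_mem hσ) hπ) ?_)).symm
  rw [Equiv.Perm.mul_apply, h]
  exact σ.symm_apply_apply v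

theorem injOn_fst_of_one_neg_notMem {H : Type*} [Group H] {Γ : Subgroup (H × ℤˣ)}
    (hneg : ((1 : H), (-1 : ℤˣ)) ∉ Γ) : Set.InjOn Prod.fst (Γ : Set (H × ℤˣ)) := by
  intro γ hγ δ hδ h
  have hmem : δ⁻¹ * γ ∈ Γ := mul_mem (inv_mem hδ) hγ
  have hfst : (δ⁻¹ * γ).1 = 1 := by simp [h]
  rcases Int.units_eq_one_or (δ⁻¹ * γ).2 with hsnd | hsnd
  · exact (inv_mul_eq_one.1 (Prod.ext hfst hsnd)).symm
  · exact absurd ((Prod.ext hfst hsnd : δ⁻¹ * γ = (1, -1)) ▸ hmem) hneg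

section Action

variable {n : ℕ}

theorem act_mul (γ δ : Equiv.Perm (Fin n) × ℤˣ) (u : Fin n → ℝ) :
    act (γ * δ) u = act γ (act δ u) := by
  funext i
  simp only [act, Prod.snd_mul, Prod.fst_mul, _root_.mul_inv_rev, Equiv.Perm.mul_apply,
    Units.val_mul, Int.cast_mul, mul_assoc]

theorem act_sum {ι : Type*} (γ : Equiv.Perm (Fin n) × ℤˣ) (s : Finset ι) (f : ι → Fin n → ℝ) :
    act γ (∑ i ∈ s, f i) = ∑ i ∈ s, act γ (f i) := by
  funext j
  simp only [act, Finset.sum_apply, Finset.mul_sum]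

theorem act_apply_fst (γ : Equiv.Perm (Fin n) × ℤˣ) (u : Fin n → ℝ) (i : Fin n) :
    act γ u (γ.1 i) = γ.2 * u i := by
  simp [act]

theorem act_single_apply (γ : Equiv.Perm (Fin n) × ℤˣ) (v i : Fin n) :
    act γ (Pi.single v 1) i = if γ.1 v = i then (γ.2 : ℝ) else 0 := by
  simp only [act, Pi.single_apply, Equiv.Perm.inv_eq_iff_eq, eq_comm (a := i), mul_ite, mul_one,
    mul_zero]

theorem eq_zero_of_act_one_neg_eq (u : Fin n → ℝ) (h : act (1, -1) u = u) : u = 0 := by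
  funext i
  have hi := congrFun h i
  simp only [act, Units.val_neg, Units.val_one, Int.cast_neg, Int.cast_one, inv_one,
    Equiv.Perm.one_apply, neg_one_mul] at hi
  simp only [Pi.zero_apply]
  linarith

end Action

/-- The symmetry `Sym(u)`, as a subset of `Γ0`. -/
def isotropy {n : ℕ} (G : SimpleGraph (Fin n)) (u : Fin n → ℝ) :
    Set (Equiv.Perm (Fin n) × ℤˣ) :=
  {γ | γ ∈ Gamma0 G ∧ act γ u = u}

theorem isotropy_zero {n : ℕ} (G : SimpleGraph (Fin n)) : isotropy G 0 = Gamma0 G := by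
  ext γ
  exact and_iff_left (funext fun i => mul_zero _)

open Classical in
noncomputable def orbitSum {n : ℕ} (Γ : Subgroup (Equiv.Perm (Fin n) × ℤˣ)) (v : Fin n) :
    Fin n → ℝ :=
  ∑ γ : Γ, act γ (Pi.single v 1)

section OrbitSum

open Classical

variable {n : ℕ} {Γ : Subgroup (Equiv.Perm (Fin n) × ℤˣ)} {v : Fin n}

theorem act_orbitSum_of_mem {γ : Equiv.Perm (Fin n) × ℤˣ} (hγ : γ ∈ Γ) :
    act γ (orbitSum Γ v) = orbitSum Γ v := by
  simp only [orbitSum, act_sum, ← act_mul]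
  exact Equiv.sum_comp (Equiv.mulLeft (⟨γ, hγ⟩ : Γ))
    fun δ => act (δ : Equiv.Perm (Fin n) × ℤˣ) (Pi.single v 1)

theorem orbitSum_apply (i : Fin n) :
    orbitSum Γ v i =
      ∑ γ : Γ, if (γ : Equiv.Perm (Fin n) × ℤˣ).1 v = i then (γ.1.2 : ℝ) else 0 := by
  simp only [orbitSum, Finset.sum_apply, act_single_apply]

theorem exists_mem_of_orbitSum_ne_zero {i : Fin n} (h : orbitSum Γ v i ≠ 0) :
    ∃ δ ∈ Γ, δ.1 v = i := by
  rw [orbitSum_apply] at h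
  obtain ⟨δ, -, hδ⟩ := Finset.exists_ne_zero_of_sum_ne_zero h
  exact ⟨δ, δ.2, by_contra fun hne => hδ (if_neg hne)⟩

theorem orbitSum_apply_fst
    (hinj : Set.InjOn (fun γ => γ.1 v) (Γ : Set (Equiv.Perm (Fin n) × ℤˣ)))
    {δ : Equiv.Perm (Fin n) × ℤˣ} (hδ : δ ∈ Γ) : orbitSum Γ v (δ.1 v) = δ.2 := by
  rw [orbitSum_apply, Finset.sum_eq_single ⟨δ, hδ⟩, if_pos rfl]
  · exact fun γ _ hne => if_neg fun h => hne (Subtype.ext (hinj γ.2 hδ h))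
  · simp

theorem mem_of_act_orbitSum_eq {G : SimpleGraph (Fin n)}
    (hgen : ∀ π ∈ autSubgroup G, π v = v → π = 1) (hΓ : Γ ≤ Gamma0 G)
    (hinj : Set.InjOn (fun γ => γ.1 v) (Γ : Set (Equiv.Perm (Fin n) × ℤˣ)))
    {γ : Equiv.Perm (Fin n) × ℤˣ} (hγ : γ ∈ Gamma0 G)
    (hfix : act γ (orbitSum Γ v) = orbitSum Γ v) : γ ∈ Γ := by
  have hv : orbitSum Γ v v = 1 := by simpa using orbitSum_apply_fst hinj (one_mem Γ)
  have hval : orbitSum Γ v (γ.1 v) = γ.2 := by rw [← hfix, act_apply_fst, hv, mul_one]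
  obtain ⟨δ, hδ, hδv⟩ :=
    exists_mem_of_orbitSum_ne_zero (Γ := Γ) (v := v) (i := γ.1 v) (by simp [hval])
  have hfst : γ.1 = δ.1 :=
    Equiv.Perm.eq_of_apply_eq_of_forall_fixed_eq_one hgen hγ.1 (hΓ hδ).1 hδv.symm
  have hsnd : γ.2 = δ.2 := by
    rw [← hδv, orbitSum_apply_fst hinj hδ] at hval
    exact Units.val_injective (Int.cast_injective hval.symm)
  exact Prod.ext hfst hsnd ▸ hδ

end OrbitSum

theorem stmt0 {n : ℕ} (G : SimpleGraph (Fin n)) (v : Fin n)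
    (hgen : ∀ π : Equiv.Perm (Fin n), π ∈ autSubgroup G → π v = v → π = 1)
    (Γ : Subgroup (Equiv.Perm (Fin n) × ℤˣ)) (hΓ : Γ ≤ Gamma0 G) :
    (∃ u : Fin n → ℝ, (Γ : Set (Equiv.Perm (Fin n) × ℤˣ)) =
        {γ | γ ∈ Gamma0 G ∧ act γ u = u}) ↔
      (Γ = Gamma0 G ∨ ((1 : Equiv.Perm (Fin n)), (-1 : ℤˣ)) ∉ Γ) := by
  change (∃ u, (Γ : Set _) = isotropy G u) ↔ _
  constructor
  · rintro ⟨u, hu⟩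
    refine or_iff_not_imp_right.2 fun hneg => ?_
    rw [not_not, ← SetLike.mem_coe, hu] at hneg
    have hu0 : u = 0 := eq_zero_of_act_one_neg_eq u hneg.2
    exact SetLike.coe_injective (hu.trans (hu0 ▸ isotropy_zero G))
  · rintro (rfl | hneg)
    · exact ⟨0, (isotropy_zero G).symm⟩
    have hinj : Set.InjOn (fun γ => γ.1 v) (Γ : Set (Equiv.Perm (Fin n) × ℤˣ)) :=
      fun γ hγ δ hδ h => injOn_fst_of_one_neg_notMem hneg hγ hδ
        (Equiv.Perm.eq_of_apply_eq_of_forall_fixed_eq_one hgen (hΓ hγ).1 (hΓ hδ).1 h)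
    refine ⟨orbitSum Γ v, Set.ext fun γ => ⟨fun hγ => ⟨hΓ hγ, act_orbitSum_of_mem hγ⟩, ?_⟩⟩
    exact fun ⟨hγ, hfix⟩ => mem_of_act_orbitSum_eq hgen hΓ hinj hγ hfix
end

section
/- Let a finite group Γ0 act linearly on V = ℝ^n. For a subgroup Γ ≤ Γ0, let Fix(Γ) = {u ∈ V : γ·u = u for all γ ∈ Γ} and pstab(Fix(Γ)) = {γ ∈ Γ0 : γ·u = u for all u ∈ Fix(Γ)}. Then Γ is an isotropy subgroup of the action (i.e. Γ = {γ ∈ Γ0 : γ·u = u} for some u ∈ V) if and only if pstab(Fix(Γ)) = Γ. -/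
/-!
If `Γ = Stab(u)` then `u ∈ Fix(Γ)`, so `pstab(Fix Γ) ⊆ Stab(u) = Γ`, and the reverse inclusion
always holds. Conversely, for each of the finitely many `γ ∉ pstab(Fix Γ)` the vectors of `Fix Γ`
fixed by `γ` form a proper subspace of `Fix Γ`; over the infinite field `ℝ` these cannot cover
`Fix Γ`, and a vector `u ∈ Fix Γ` outside all of them has `Stab(u) = pstab(Fix Γ) = Γ`.
-/

theorem Submodule.exists_mem_forall_notMem_of_forall_not_le {k E ι : Type*} [DivisionRing k]
    [Infinite k] [AddCommGroup E] [Module k E] [Finite ι] (U : Submodule k E)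
    (p : ι → Submodule k E) (hp : ∀ i, ¬U ≤ p i) : ∃ u ∈ U, ∀ i, u ∉ p i := by
  by_contra! hcover
  obtain ⟨i, hi⟩ := Subspace.exists_eq_top_of_iUnion_eq_univ (p := fun i => (p i).comap U.subtype)
    (Set.eq_univ_of_forall fun u => Set.mem_iUnion.2 (hcover u u.2))
  exact hp i (Submodule.comap_subtype_eq_top.1 hi)

namespace Representation

section Semiring

variable {k G V : Type*} [Semiring k] [Group G] [AddCommMonoid V] [Module k V]
  (ρ : Representation k G V)

def stabilizer (v : V) : Subgroup G where
  carrier := {g | ρ g v = v}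
  mul_mem' {g h} hg hh := by simp_all [map_mul]
  one_mem' := by simp
  inv_mem' hg := ρ.inv_apply_eq_iff.2 hg.symm

@[simp]
theorem mem_stabilizer {v : V} {g : G} : g ∈ ρ.stabilizer v ↔ ρ g v = v := Iff.rfl

def pointwiseStabilizer (U : Set V) : Subgroup G := ⨅ u ∈ U, ρ.stabilizer u

@[simp]
theorem mem_pointwiseStabilizer {U : Set V} {g : G} :
    g ∈ ρ.pointwiseStabilizer U ↔ ∀ u ∈ U, ρ g u = u := by
  simp [pointwiseStabilizer, Subgroup.mem_iInf]

theorem pointwiseStabilizer_le_stabilizer {U : Set V} {u : V} (hu : u ∈ U) :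
    ρ.pointwiseStabilizer U ≤ ρ.stabilizer u :=
  fun _ hg => ρ.mem_pointwiseStabilizer.1 hg u hu

end Semiring

section CommRing

variable {k G V : Type*} [CommRing k] [Group G] [AddCommGroup V] [Module k V]
  (ρ : Representation k G V)

theorem le_pointwiseStabilizer_invariants (Γ : Subgroup G) :
    Γ ≤ ρ.pointwiseStabilizer (invariants (ρ.comp Γ.subtype) : Set V) :=
  fun γ hγ => ρ.mem_pointwiseStabilizer.2 fun _ hu => hu ⟨γ, hγ⟩

end CommRing

section Field

variable {k G V : Type*} [Field k] [Group G] [AddCommGroup V] [Module k V]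
  [Infinite k] [Finite G] (ρ : Representation k G V)

theorem exists_stabilizer_eq_pointwiseStabilizer (U : Submodule k V) :
    ∃ u ∈ U, ρ.stabilizer u = ρ.pointwiseStabilizer U := by
  obtain ⟨u, huU, hu⟩ := U.exists_mem_forall_notMem_of_forall_not_le
    (ι := {g // g ∉ ρ.pointwiseStabilizer U}) (fun g => LinearMap.ker (ρ g - 1))
    fun g hle => g.2 <| ρ.mem_pointwiseStabilizer.2 fun v hv => by
      simpa [sub_eq_zero] using hle hv
  refine ⟨u, huU, le_antisymm (fun g hg => ?_) (ρ.pointwiseStabilizer_le_stabilizer huU)⟩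
  by_contra hgU
  exact hu ⟨g, hgU⟩ (by simpa [sub_eq_zero] using hg)

theorem exists_stabilizer_eq_iff (Γ : Subgroup G) :
    (∃ u, Γ = ρ.stabilizer u) ↔
      ρ.pointwiseStabilizer (invariants (ρ.comp Γ.subtype) : Set V) = Γ := by
  constructor
  · rintro ⟨u, rfl⟩
    have hu : u ∈ invariants (ρ.comp (ρ.stabilizer u).subtype) := fun g => g.2
    exact le_antisymm (ρ.pointwiseStabilizer_le_stabilizer hu)
      (ρ.le_pointwiseStabilizer_invariants _)
  · intro h
    obtain ⟨u, -, hu⟩ := ρ.exists_stabilizer_eq_pointwiseStabilizer (invariants (ρ.comp Γ.subtype))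
    exact ⟨u, by rw [hu, h]⟩

end Field

end Representation

theorem stmt10 {n : ℕ} (Γ0 : Type) [Group Γ0] [Finite Γ0]
    (ρ : Representation ℝ Γ0 (Fin n → ℝ)) (Γ : Subgroup Γ0) :
    (∃ u : Fin n → ℝ, (Γ : Set Γ0) = {γ | ρ γ u = u}) ↔
      {γ : Γ0 | ∀ u : Fin n → ℝ, (∀ δ ∈ Γ, ρ δ u = u) → ρ γ u = u} = (Γ : Set Γ0) := by
  have hpstab : {γ : Γ0 | ∀ u : Fin n → ℝ, (∀ δ ∈ Γ, ρ δ u = u) → ρ γ u = u} =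
      ρ.pointwiseStabilizer (Representation.invariants (ρ.comp Γ.subtype)) := by
    ext γ
    simp
  rw [hpstab, SetLike.coe_set_eq, ← Representation.exists_stabilizer_eq_iff]
  exact exists_congr fun u => SetLike.coe_set_eq (q := ρ.stabilizer u)
end
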